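/- Under the hypotheses of the main theorem, if additionally Φ(s,s) → 0 as s → 0⁺ and lim_{t→∞} φ(t) = lim_{t→∞} ξ(t) = 0, then the quantity c(FX) := limsup_{t→∞} diam (FX)(t) satisfies c(FX) ≤ k·c(X) for every nonempty X ⊆ B_{r₀}, where k = (φ*Φ(r₀,r₀) + ψ*)/Γ(α+1), and k < 1. -/

import Mathlib

/-!
For `x, y` in the ball and `t ≥ 0`, write `f(t,x)Iₓ - f(t,y)I_y = (f(t,x) - f(t,y))Iₓ + f(t,y)(Iₓ - I_y)`.
The Lipschitz bound on `f`, the modulus of `u` and `∫₀ᵗ (t-s)^(α-1) ds = t^α/α` give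
`|(Fx)(t) - (Fy)(t)| ≤ k |x(t) - y(t)| + (r₀ φ(t) + ξ(t)) Φ(2r₀,2r₀)/Γ(α+1)`,
and the error term tends to `0` because `φ` and `ξ` do. Passing to the limsup of diameters gives
`c(FX) ≤ k c(X)`; `k < 1` is hypothesis (h₅).
-/

open Real intervalIntegral Filter

section RiemannLiouvilleKernel

open MeasureTheory Set

variable {α t : ℝ}

lemma intervalIntegrable_sub_rpow (hα : 0 < α) (t : ℝ) :
    IntervalIntegrable (fun s => (t - s) ^ (α - 1)) volume 0 t := by
  simpa using
    ((intervalIntegrable_rpow' (by linarith) : IntervalIntegrable (fun s : ℝ => s ^ (α - 1))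
      volume (t - t) (t - 0)).symm.comp_sub_left t)

lemma integral_sub_rpow (hα : 0 < α) (t : ℝ) :
    ∫ s in (0 : ℝ)..t, (t - s) ^ (α - 1) = t ^ α / α := by
  rw [integral_comp_sub_left (fun s : ℝ => s ^ (α - 1)), sub_self, sub_zero,
    integral_rpow (Or.inl (by linarith)), zero_rpow (by linarith), sub_add_cancel]
  ring

lemma ContinuousOn.intervalIntegrable_mul_sub_rpow {g : ℝ → ℝ} (hα : 0 < α) (ht : 0 ≤ t)
    (hg : ContinuousOn g (Icc 0 t)) :
    IntervalIntegrable (fun s => g s * (t - s) ^ (α - 1)) volume 0 t :=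
  (intervalIntegrable_sub_rpow hα t).continuousOn_mul (by rwa [uIcc_of_le ht])

lemma abs_integral_mul_sub_rpow_le {g : ℝ → ℝ} {C : ℝ} (hα : 0 < α) (ht : 0 ≤ t)
    (hC : ∀ s ∈ Icc 0 t, |g s| ≤ C) :
    |∫ s in (0 : ℝ)..t, g s * (t - s) ^ (α - 1)| ≤ C * (t ^ α / α) := by
  rw [← integral_sub_rpow hα, ← intervalIntegral.integral_const_mul, ← Real.norm_eq_abs]
  refine norm_integral_le_of_norm_le ht (ae_of_all _ fun s hs => ?_)
    ((intervalIntegrable_sub_rpow hα t).const_mul C)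
  have hw : 0 ≤ (t - s) ^ (α - 1) := rpow_nonneg (by linarith [hs.2]) _
  rw [Real.norm_eq_abs, abs_mul, abs_of_nonneg hw]
  exact mul_le_mul_of_nonneg_right (hC s (Ioc_subset_Icc_self hs)) hw

end RiemannLiouvilleKernel

lemma abs_mul_sub_mul_le (a b c d : ℝ) : |a * c - b * d| ≤ |a - b| * |c| + |b| * |c - d| := by
  calc |a * c - b * d| = |(a - b) * c + b * (c - d)| := by ring_nf
    _ ≤ |a - b| * |c| + |b| * |c - d| := by
      rw [← abs_mul, ← abs_mul]; exact abs_add_le _ _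

lemma limsup_le_mul_limsup_of_le_add {ι : Type*} {L : Filter ι} [L.NeBot] {G d E : ι → ℝ}
    {k : ℝ} (hk : 0 ≤ k) (hG : ∀ᶠ i in L, 0 ≤ G i) (hd : IsBoundedUnder (· ≤ ·) L d)
    (hE : Tendsto E L (nhds 0)) (hle : ∀ᶠ i in L, G i ≤ k * d i + E i) :
    limsup G L ≤ k * limsup d L := by
  refine le_of_forall_pos_le_add fun ε hε => ?_
  have hk1 : 0 < k + 1 := by linarith
  have hδ : 0 < ε / (k + 1) := div_pos hε hk1
  refine limsup_le_of_le (isCoboundedUnder_le_of_eventually_le L hG) ?_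
  filter_upwards [hle, eventually_lt_of_limsup_lt (lt_add_of_pos_right _ hδ) hd,
    hE.eventually_lt_const hδ] with i hGi hdi hEi
  calc G i ≤ k * (limsup d L + ε / (k + 1)) + ε / (k + 1) := by
        linarith [mul_le_mul_of_nonneg_left hdi.le hk]
    _ = k * limsup d L + ε := by field_simp; ring

section VolterraOperator

open Set

variable {α l r t : ℝ} {a m n ustar : ℝ → ℝ} {f : ℝ → ℝ → ℝ} {u : ℝ → ℝ → ℝ → ℝ → ℝ}
  {Φ : ℝ → ℝ → ℝ} {x y : ℝ → ℝ}

noncomputable def volterraIntegral (u : ℝ → ℝ → ℝ → ℝ → ℝ) (α l : ℝ) (x : ℝ → ℝ) (t : ℝ) : ℝ :=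
  ∫ s in (0 : ℝ)..t, u t s (x s) (x (l * s)) * (t - s) ^ (α - 1)

-- `volterraOp a f u α l x t` is the paper's `(Fx)(t)`.
noncomputable def volterraOp (a : ℝ → ℝ) (f : ℝ → ℝ → ℝ) (u : ℝ → ℝ → ℝ → ℝ → ℝ) (α l : ℝ)
    (x : ℝ → ℝ) (t : ℝ) : ℝ :=
  a t + f t (x t) / Gamma α * volterraIntegral u α l x t

def HasModulus (u : ℝ → ℝ → ℝ → ℝ → ℝ) (n : ℝ → ℝ) (Φ : ℝ → ℝ → ℝ) : Prop :=
  ∀ t s : ℝ, 0 ≤ s → s ≤ t → ∀ x₁ y₁ x₂ y₂ : ℝ,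
    |u t s x₂ y₂ - u t s x₁ y₁| ≤ n t * Φ |x₂ - x₁| |y₂ - y₁|

def Monotone₂OnNonneg (Φ : ℝ → ℝ → ℝ) : Prop :=
  ∀ p q p' q' : ℝ, 0 ≤ p → 0 ≤ q → p ≤ p' → q ≤ q' → Φ p q ≤ Φ p' q'

lemma continuousOn_comp_delay
    (hu : ContinuousOn (fun p : ℝ × ℝ × ℝ × ℝ => u p.1 p.2.1 p.2.2.1 p.2.2.2)
      (Ici 0 ×ˢ Ici 0 ×ˢ univ ×ˢ univ))
    (hl : 0 ≤ l) (ht : 0 ≤ t) (hx : ContinuousOn x (Ici 0)) :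
    ContinuousOn (fun s => u t s (x s) (x (l * s))) (Icc 0 t) := by
  have hdelay : ContinuousOn (fun s => x (l * s)) (Icc 0 t) :=
    hx.comp (continuous_const.mul continuous_id).continuousOn fun s hs => mul_nonneg hl hs.1
  refine hu.comp (continuousOn_const.prodMk (continuousOn_id.prodMk
    ((hx.mono fun s hs => hs.1).prodMk hdelay))) fun s hs => ⟨ht, hs.1, trivial, trivial⟩

lemma abs_le_add_of_modulus
    (humod : HasModulus u n Φ) (hΦmono : Monotone₂OnNonneg Φ)
    (hn : 0 ≤ n t) {s p q : ℝ} (hs : s ∈ Icc 0 t) (hp : |p| ≤ r) (hq : |q| ≤ r) :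
    |u t s p q| ≤ |u t s 0 0| + n t * Φ r r := by
  have hmod := humod t s hs.1 hs.2 0 0 p q
  simp only [sub_zero] at hmod
  have hΦ := mul_le_mul_of_nonneg_left (hΦmono _ _ _ _ (abs_nonneg p) (abs_nonneg q) hp hq) hn
  linarith [abs_sub_abs_le_abs_sub (u t s p q) (u t s 0 0)]

lemma abs_sub_le_of_modulus
    (humod : HasModulus u n Φ) (hΦmono : Monotone₂OnNonneg Φ)
    (hn : 0 ≤ n t) {s p q p' q' : ℝ} (hs : s ∈ Icc 0 t) (hp : |p| ≤ r) (hq : |q| ≤ r)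
    (hp' : |p'| ≤ r) (hq' : |q'| ≤ r) :
    |u t s p q - u t s p' q'| ≤ n t * Φ (2 * r) (2 * r) := by
  refine (humod t s hs.1 hs.2 p' q' p q).trans (mul_le_mul_of_nonneg_left ?_ hn)
  exact hΦmono _ _ _ _ (abs_nonneg _) (abs_nonneg _)
    (by linarith [abs_sub p p']) (by linarith [abs_sub q q'])

lemma abs_volterraIntegral_le (hα : 0 < α) (hl : 0 ≤ l) (ht : 0 ≤ t)
    (humod : HasModulus u n Φ) (hΦmono : Monotone₂OnNonneg Φ)
    (hn : 0 ≤ n t) (hustar : ∀ s ∈ Icc 0 t, |u t s 0 0| ≤ ustar t)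
    (hx : ∀ s ∈ Ici 0, |x s| ≤ r) :
    |volterraIntegral u α l x t| ≤ (ustar t + n t * Φ r r) * (t ^ α / α) :=
  abs_integral_mul_sub_rpow_le hα ht fun s hs =>
    (abs_le_add_of_modulus humod hΦmono hn hs (hx s hs.1) (hx _ (mul_nonneg hl hs.1))).trans
      (by linarith [hustar s hs])

lemma abs_volterraIntegral_sub_le (hα : 0 < α) (hl : 0 ≤ l) (ht : 0 ≤ t)
    (hu : ContinuousOn (fun p : ℝ × ℝ × ℝ × ℝ => u p.1 p.2.1 p.2.2.1 p.2.2.2)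
      (Ici 0 ×ˢ Ici 0 ×ˢ univ ×ˢ univ))
    (humod : HasModulus u n Φ) (hΦmono : Monotone₂OnNonneg Φ)
    (hn : 0 ≤ n t) (hxc : ContinuousOn x (Ici 0)) (hyc : ContinuousOn y (Ici 0))
    (hx : ∀ s ∈ Ici 0, |x s| ≤ r) (hy : ∀ s ∈ Ici 0, |y s| ≤ r) :
    |volterraIntegral u α l x t - volterraIntegral u α l y t| ≤
      n t * Φ (2 * r) (2 * r) * (t ^ α / α) := by
  rw [volterraIntegral, volterraIntegral,
    ← integral_sub ((continuousOn_comp_delay hu hl ht hxc).intervalIntegrable_mul_sub_rpow hα ht)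
      ((continuousOn_comp_delay hu hl ht hyc).intervalIntegrable_mul_sub_rpow hα ht)]
  simp_rw [← sub_mul]
  refine abs_integral_mul_sub_rpow_le hα ht fun s hs => ?_
  have hls : l * s ∈ Ici 0 := mul_nonneg hl hs.1
  exact abs_sub_le_of_modulus humod hΦmono hn hs (hx s hs.1) (hx _ hls) (hy s hs.1) (hy _ hls)

lemma abs_volterraOp_sub_le (hα : 0 < α) (hl : 0 ≤ l) (ht : 0 ≤ t)
    (hu : ContinuousOn (fun p : ℝ × ℝ × ℝ × ℝ => u p.1 p.2.1 p.2.2.1 p.2.2.2)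
      (Ici 0 ×ˢ Ici 0 ×ˢ univ ×ˢ univ))
    (hm : 0 ≤ m t) (hLip : ∀ p q : ℝ, |f t p - f t q| ≤ m t * |p - q|)
    (humod : HasModulus u n Φ) (hΦmono : Monotone₂OnNonneg Φ)
    (hn : 0 ≤ n t) (hustar : ∀ s ∈ Icc 0 t, |u t s 0 0| ≤ ustar t)
    (hxc : ContinuousOn x (Ici 0)) (hyc : ContinuousOn y (Ici 0))
    (hx : ∀ s ∈ Ici 0, |x s| ≤ r) (hy : ∀ s ∈ Ici 0, |y s| ≤ r) :
    |volterraOp a f u α l x t - volterraOp a f u α l y t| ≤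
      (m t * |x t - y t| * (ustar t + n t * Φ r r) +
        (m t * r + |f t 0|) * (n t * Φ (2 * r) (2 * r))) * t ^ α / Gamma (α + 1) := by
  have hΓ : 0 < Gamma α := Gamma_pos_of_pos hα
  have hr : 0 ≤ r := (abs_nonneg _).trans (hy t ht)
  have hfy : |f t (y t)| ≤ m t * r + |f t 0| := by
    have hLip0 := hLip (y t) 0
    rw [sub_zero] at hLip0
    linarith [abs_sub_abs_le_abs_sub (f t (y t)) (f t 0), mul_le_mul_of_nonneg_left (hy t ht) hm]
  set Ix := volterraIntegral u α l x t
  set Iy := volterraIntegral u α l y t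
  calc |volterraOp a f u α l x t - volterraOp a f u α l y t|
      = |f t (x t) * Ix - f t (y t) * Iy| / Gamma α := by
        rw [volterraOp, volterraOp, add_sub_add_left_eq_sub, div_mul_eq_mul_div,
          div_mul_eq_mul_div, ← sub_div, abs_div, abs_of_pos hΓ]
    _ ≤ (|f t (x t) - f t (y t)| * |Ix| + |f t (y t)| * |Ix - Iy|) / Gamma α := by
        gcongr; exact abs_mul_sub_mul_le _ _ _ _
    _ ≤ (m t * |x t - y t| * ((ustar t + n t * Φ r r) * (t ^ α / α)) +
          (m t * r + |f t 0|) * (n t * Φ (2 * r) (2 * r) * (t ^ α / α))) / Gamma α := by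
        gcongr
        · exact hLip _ _
        · exact abs_volterraIntegral_le hα hl ht humod hΦmono hn hustar hx
        · exact abs_volterraIntegral_sub_le hα hl ht hu humod hΦmono hn hxc hyc hx hy
    _ = _ := by rw [Gamma_add_one hα.ne']; field_simp

lemma image_eval_subset_Icc {X : Set (ℝ → ℝ)} (hX : ∀ x ∈ X, |x t| ≤ r) :
    (fun x : ℝ → ℝ => x t) '' X ⊆ Icc (-r) r := by
  rintro _ ⟨x, hx, rfl⟩
  exact abs_le.mp (hX x hx)

lemma diam_image_eval_le {X : Set (ℝ → ℝ)} (hr : 0 ≤ r) (hX : ∀ x ∈ X, |x t| ≤ r) :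
    Metric.diam ((fun x : ℝ → ℝ => x t) '' X) ≤ 2 * r :=
  (Metric.diam_mono (image_eval_subset_Icc hX) (Metric.isBounded_Icc _ _)).trans_eq
    (by rw [Real.diam_Icc (by linarith)]; ring)

lemma diam_image_volterraOp_le {φs ψs : ℝ} {X : Set (ℝ → ℝ)} (hα : 0 < α) (hl : 0 ≤ l)
    (ht : 0 ≤ t)
    (hu : ContinuousOn (fun p : ℝ × ℝ × ℝ × ℝ => u p.1 p.2.1 p.2.2.1 p.2.2.2)
      (Ici 0 ×ˢ Ici 0 ×ˢ univ ×ˢ univ))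
    (hm : 0 ≤ m t) (hLip : ∀ p q : ℝ, |f t p - f t q| ≤ m t * |p - q|)
    (humod : HasModulus u n Φ) (hΦmono : Monotone₂OnNonneg Φ) (hΦ : 0 ≤ Φ r r)
    (hn : 0 ≤ n t) (hustar : ∀ s ∈ Icc 0 t, |u t s 0 0| ≤ ustar t)
    (hφ : m t * n t * t ^ α ≤ φs) (hψ : m t * ustar t * t ^ α ≤ ψs)
    (hXne : X.Nonempty) (hX : ∀ x ∈ X, ContinuousOn x (Ici 0) ∧ ∀ s ∈ Ici 0, |x s| ≤ r) :
    Metric.diam ((fun x => volterraOp a f u α l x t) '' X) ≤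
      (φs * Φ r r + ψs) / Gamma (α + 1) * Metric.diam ((fun x : ℝ → ℝ => x t) '' X) +
        (r * (m t * n t * t ^ α) + n t * |f t 0| * t ^ α) * Φ (2 * r) (2 * r) /
          Gamma (α + 1) := by
  have hΓ : 0 < Gamma (α + 1) := Gamma_pos_of_pos (by linarith)
  have htα : 0 ≤ t ^ α := rpow_nonneg ht α
  have hust : 0 ≤ ustar t := (abs_nonneg _).trans (hustar 0 ⟨le_rfl, ht⟩)
  refine Metric.diam_le_of_forall_dist_le_of_nonempty (hXne.image _) ?_
  rintro _ ⟨x, hx, rfl⟩ _ ⟨y, hy, rfl⟩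
  have hδ : |x t - y t| ≤ Metric.diam ((fun x : ℝ → ℝ => x t) '' X) := by
    rw [← Real.dist_eq]
    exact Metric.dist_le_diam_of_mem
      ((Metric.isBounded_Icc _ _).subset (image_eval_subset_Icc fun z hz => (hX z hz).2 t ht))
      ⟨x, hx, rfl⟩ ⟨y, hy, rfl⟩
  have hφs : 0 ≤ φs := (by positivity : (0 : ℝ) ≤ m t * n t * t ^ α).trans hφ
  have hψs : 0 ≤ ψs := (by positivity : (0 : ℝ) ≤ m t * ustar t * t ^ α).trans hψ
  calc dist (volterraOp a f u α l x t) (volterraOp a f u α l y t)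
      ≤ (m t * |x t - y t| * (ustar t + n t * Φ r r) +
        (m t * r + |f t 0|) * (n t * Φ (2 * r) (2 * r))) * t ^ α / Gamma (α + 1) :=
        abs_volterraOp_sub_le hα hl ht hu hm hLip humod hΦmono hn hustar (hX x hx).1
          (hX y hy).1 (hX x hx).2 (hX y hy).2
    _ = (m t * n t * t ^ α * Φ r r + m t * ustar t * t ^ α) * |x t - y t| / Gamma (α + 1) +
        (r * (m t * n t * t ^ α) + n t * |f t 0| * t ^ α) * Φ (2 * r) (2 * r) /
          Gamma (α + 1) := by ring
    _ ≤ _ := by rw [div_mul_eq_mul_div]; gcongr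

end VolterraOperator

theorem stmt11_general
    (α l : ℝ) (hα : 0 < α) (hl : 0 < l)
    (a m n : ℝ → ℝ) (f : ℝ → ℝ → ℝ) (u : ℝ → ℝ → ℝ → ℝ → ℝ) (Φ : ℝ → ℝ → ℝ)
    (ustar : ℝ → ℝ) (φs ψs r₀ : ℝ)
    -- (h₂) : f is continuous and Lipschitz in its second variable with coefficient m
    (hm0 : ∀ t ∈ Set.Ici (0:ℝ), 0 ≤ m t)
    (hLip : ∀ t ∈ Set.Ici (0:ℝ), ∀ x y : ℝ, |f t x - f t y| ≤ m t * |x - y|)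
    -- (h₃) : u is continuous with modulus of continuity n(t) Φ
    (hu : ContinuousOn (fun p : ℝ × ℝ × ℝ × ℝ => u p.1 p.2.1 p.2.2.1 p.2.2.2)
      (Set.Ici 0 ×ˢ Set.Ici 0 ×ˢ Set.univ ×ˢ Set.univ))
    (hn0 : ∀ t ∈ Set.Ici (0:ℝ), 0 ≤ n t)
    (hΦmono : ∀ p q p' q' : ℝ, 0 ≤ p → 0 ≤ q → p ≤ p' → q ≤ q' → Φ p q ≤ Φ p' q')
    (hΦnn : ∀ p q : ℝ, 0 ≤ p → 0 ≤ q → 0 ≤ Φ p q)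
    (humod : ∀ t s : ℝ, 0 ≤ s → s ≤ t → ∀ x₁ y₁ x₂ y₂ : ℝ,
      |u t s x₂ y₂ - u t s x₁ y₁| ≤ n t * Φ |x₂ - x₁| |y₂ - y₁|)
    -- u*(t) = max_{0 ≤ s ≤ t} |u(t,s,0,0)|
    (hustar : ∀ t ∈ Set.Ici (0:ℝ),
      IsGreatest ((fun s => |u t s 0 0|) '' Set.Icc 0 t) (ustar t))
    -- (h₄) : φ, ψ, ξ, η are bounded with suprema φ*, ψ*, ξ*, η*, and φ, ξ → 0 at ∞
    (hφlub : IsLUB ((fun t => m t * n t * t ^ α) '' Set.Ici 0) φs)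
    (hψlub : IsLUB ((fun t => m t * ustar t * t ^ α) '' Set.Ici 0) ψs)
    (hφ0 : Filter.Tendsto (fun t => m t * n t * t ^ α) Filter.atTop (nhds 0))
    (hξ0 : Filter.Tendsto (fun t => n t * |f t 0| * t ^ α) Filter.atTop (nhds 0))
    -- (h₅)
    (hr₀ : 0 < r₀)
    (hk : φs * Φ r₀ r₀ + ψs < Real.Gamma (α + 1))
    (X : Set (ℝ → ℝ)) (hXne : X.Nonempty)
    (hXsub : ∀ x ∈ X, ContinuousOn x (Set.Ici 0) ∧ ∀ t ∈ Set.Ici (0:ℝ), |x t| ≤ r₀) :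
    Filter.limsup
        (fun t : ℝ => Metric.diam ((fun x : ℝ → ℝ => a t + (f t (x t) / Real.Gamma α) *
          ∫ s in (0:ℝ)..t, u t s (x s) (x (l * s)) * (t - s) ^ (α - 1)) '' X))
        Filter.atTop ≤
      (φs * Φ r₀ r₀ + ψs) / Real.Gamma (α + 1) *
        Filter.limsup (fun t : ℝ => Metric.diam ((fun x : ℝ → ℝ => x t) '' X))
          Filter.atTop ∧
    (φs * Φ r₀ r₀ + ψs) / Real.Gamma (α + 1) < 1 := by
  have hΓ : 0 < Gamma (α + 1) := Gamma_pos_of_pos (by linarith)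
  have hφs : 0 ≤ φs := hφlub.1 ⟨0, Set.self_mem_Ici, by simp [zero_rpow hα.ne']⟩
  have hψs : 0 ≤ ψs := hψlub.1 ⟨0, Set.self_mem_Ici, by simp [zero_rpow hα.ne']⟩
  have hΦr₀ : 0 ≤ Φ r₀ r₀ := hΦnn r₀ r₀ hr₀.le hr₀.le
  have hdiam : ∀ᶠ t in atTop, Metric.diam ((fun x : ℝ → ℝ => x t) '' X) ≤ 2 * r₀ := by
    filter_upwards [eventually_ge_atTop 0] with t ht
    exact diam_image_eval_le hr₀.le fun x hx => (hXsub x hx).2 t ht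
  have hE : Tendsto (fun t => (r₀ * (m t * n t * t ^ α) + n t * |f t 0| * t ^ α) *
      Φ (2 * r₀) (2 * r₀) / Gamma (α + 1)) atTop (nhds 0) := by
    simpa using (((hφ0.const_mul r₀).add hξ0).mul_const _).div_const _
  refine ⟨limsup_le_mul_limsup_of_le_add (by positivity)
    (Eventually.of_forall fun _ => Metric.diam_nonneg) ⟨2 * r₀, hdiam⟩ hE ?_,
    (div_lt_one hΓ).2 hk⟩
  filter_upwards [eventually_ge_atTop 0] with t ht
  exact diam_image_volterraOp_le hα hl.le ht hu (hm0 t ht) (hLip t ht) humod hΦmono hΦr₀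
    (hn0 t ht) (fun s hs => (hustar t ht).2 ⟨s, hs, rfl⟩) (hφlub.1 ⟨t, ht, rfl⟩)
    (hψlub.1 ⟨t, ht, rfl⟩) hXne hXsub

/-- The estimate `c(𝓕X) ≤ k c(X)` with `k = (φ*Φ(r₀,r₀)+ψ*)/Γ(α+1) < 1`. -/
theorem stmt11
    (α l : ℝ) (hα : 0 < α) (hα1 : α < 1) (hl : 0 < l) (hl1 : l < 1)
    (a m n : ℝ → ℝ) (f : ℝ → ℝ → ℝ) (u : ℝ → ℝ → ℝ → ℝ → ℝ) (Φ : ℝ → ℝ → ℝ)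
    (ustar : ℝ → ℝ) (normA φs ψs ξs ηs r₀ : ℝ)
    -- (h₁) : a is continuous and bounded on ℝ≥0, with sup norm normA
    (ha : ContinuousOn a (Set.Ici 0))
    (hA : IsLUB ((fun t => |a t|) '' Set.Ici 0) normA)
    -- (h₂) : f is continuous and Lipschitz in its second variable with coefficient m
    (hf : ContinuousOn (fun p : ℝ × ℝ => f p.1 p.2) (Set.Ici 0 ×ˢ Set.univ))
    (hmc : ContinuousOn m (Set.Ici 0)) (hm0 : ∀ t ∈ Set.Ici (0:ℝ), 0 ≤ m t)
    (hLip : ∀ t ∈ Set.Ici (0:ℝ), ∀ x y : ℝ, |f t x - f t y| ≤ m t * |x - y|)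
    -- (h₃) : u is continuous with modulus of continuity n(t) Φ
    (hu : ContinuousOn (fun p : ℝ × ℝ × ℝ × ℝ => u p.1 p.2.1 p.2.2.1 p.2.2.2)
      (Set.Ici 0 ×ˢ Set.Ici 0 ×ˢ Set.univ ×ˢ Set.univ))
    (hnc : ContinuousOn n (Set.Ici 0)) (hn0 : ∀ t ∈ Set.Ici (0:ℝ), 0 ≤ n t)
    (hΦc : ContinuousOn (fun p : ℝ × ℝ => Φ p.1 p.2) (Set.Ici 0 ×ˢ Set.Ici 0))
    (hΦmono : ∀ p q p' q' : ℝ, 0 ≤ p → 0 ≤ q → p ≤ p' → q ≤ q' → Φ p q ≤ Φ p' q')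
    (hΦ0 : Φ 0 0 = 0)
    (hΦnn : ∀ p q : ℝ, 0 ≤ p → 0 ≤ q → 0 ≤ Φ p q)
    (humod : ∀ t s : ℝ, 0 ≤ s → s ≤ t → ∀ x₁ y₁ x₂ y₂ : ℝ,
      |u t s x₂ y₂ - u t s x₁ y₁| ≤ n t * Φ |x₂ - x₁| |y₂ - y₁|)
    -- u*(t) = max_{0 ≤ s ≤ t} |u(t,s,0,0)|
    (hustar : ∀ t ∈ Set.Ici (0:ℝ),
      IsGreatest ((fun s => |u t s 0 0|) '' Set.Icc 0 t) (ustar t))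
    -- (h₄) : φ, ψ, ξ, η are bounded with suprema φ*, ψ*, ξ*, η*, and φ, ξ → 0 at ∞
    (hφlub : IsLUB ((fun t => m t * n t * t ^ α) '' Set.Ici 0) φs)
    (hψlub : IsLUB ((fun t => m t * ustar t * t ^ α) '' Set.Ici 0) ψs)
    (hξlub : IsLUB ((fun t => n t * |f t 0| * t ^ α) '' Set.Ici 0) ξs)
    (hηlub : IsLUB ((fun t => ustar t * |f t 0| * t ^ α) '' Set.Ici 0) ηs)
    (hφ0 : Filter.Tendsto (fun t => m t * n t * t ^ α) Filter.atTop (nhds 0))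
    (hξ0 : Filter.Tendsto (fun t => n t * |f t 0| * t ^ α) Filter.atTop (nhds 0))
    -- (h₅)
    (hr₀ : 0 < r₀)
    (hineq : normA * Real.Gamma (α + 1) +
      (φs * r₀ * Φ r₀ r₀ + ψs * r₀ + ξs * Φ r₀ r₀ + ηs) ≤ r₀ * Real.Gamma (α + 1))
    (hk : φs * Φ r₀ r₀ + ψs < Real.Gamma (α + 1))
    -- additional assumptions: Φ(s,s) → 0 as s → 0⁺ (φ, ξ → 0 at ∞ is hφ0, hξ0)
    (hΦlim : Tendsto (fun s => Φ s s) (nhdsWithin 0 (Set.Ioi 0)) (nhds 0))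
    (X : Set (ℝ → ℝ)) (hXne : X.Nonempty)
    (hXsub : ∀ x ∈ X, ContinuousOn x (Set.Ici 0) ∧ ∀ t ∈ Set.Ici (0:ℝ), |x t| ≤ r₀) :
    Filter.limsup
        (fun t : ℝ => Metric.diam ((fun x : ℝ → ℝ => a t + (f t (x t) / Real.Gamma α) *
          ∫ s in (0:ℝ)..t, u t s (x s) (x (l * s)) * (t - s) ^ (α - 1)) '' X))
        Filter.atTop ≤
      (φs * Φ r₀ r₀ + ψs) / Real.Gamma (α + 1) *
        Filter.limsup (fun t : ℝ => Metric.diam ((fun x : ℝ → ℝ => x t) '' X))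
          Filter.atTop ∧
    (φs * Φ r₀ r₀ + ψs) / Real.Gamma (α + 1) < 1 :=
  stmt11_general α l hα hl a m n f u Φ ustar φs ψs r₀ hm0 hLip hu hn0 hΦmono hΦnn humod hustar hφlub
    hψlub hφ0 hξ0 hr₀ hk X hXne hXsub
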